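/- Let n ≥ 2 be even. The explicit matrices H, X, Y satisfy: (a) HᵀJ + JH = 0, XᵀJ + JX = 0 and YᵀJ + JY = 0 (i.e., H, X, Y belong to the symplectic Lie algebra sp(2n,ℝ) of J); (b) HX − XH = 2X; (c) HY − YH = 2Y; (d) XY = YX; (e) XXᵀ − XᵀX = H. -/
import Mathlib


open Matrix

noncomputable section

def I2 : Matrix (Fin 2) (Fin 2) ℝ := !![1, 0; 0, 1]
def Tm : Matrix (Fin 2) (Fin 2) ℝ := !![1, 0; 0, -1]
def Rm : Matrix (Fin 2) (Fin 2) ℝ := !![0, -1; 1, 0]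
def Pm : Matrix (Fin 2) (Fin 2) ℝ := !![0, 1; 1, 0]

/-- `c_k = √(k(n−k))`. -/
def cc (n k : ℕ) : ℝ := Real.sqrt (k * (n - k : ℕ))

/-- The 2n×2n matrix, viewed as an n×n array of 2×2 blocks, whose only nonzero blocks are
`B k` at superdiagonal block positions (k, k+1) for 1-based `k = 1,…,n−1`. -/
def blkSup (n : ℕ) (B : ℕ → Matrix (Fin 2) (Fin 2) ℝ) :
    Matrix (Fin (2*n)) (Fin (2*n)) ℝ :=
  Matrix.of fun r c =>
    if (c:ℕ)/2 = (r:ℕ)/2 + 1 then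
      B ((r:ℕ)/2 + 1) ⟨(r:ℕ) % 2, by omega⟩ ⟨(c:ℕ) % 2, by omega⟩
    else 0

/-- The matrix `X` (n even): superdiagonal blocks `c_k I₂` for `k < n/2`,
`c_{n/2} T` at `k = n/2`, and `−c_k I₂` for `k > n/2`. -/
def Xeven (n : ℕ) : Matrix (Fin (2*n)) (Fin (2*n)) ℝ :=
  blkSup n (fun k =>
    if k < n/2 then cc n k • I2
    else if k = n/2 then cc n (n/2) • Tm
    else -(cc n k) • I2)

/-- The matrix `Y` (n even): superdiagonal blocks `c_k R` for `k ≠ n/2` and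
`c_{n/2} P` at `k = n/2`. -/
def Yeven (n : ℕ) : Matrix (Fin (2*n)) (Fin (2*n)) ℝ :=
  blkSup n (fun k => if k = n/2 then cc n (n/2) • Pm else cc n k • Rm)

/-- The matrix `H` (n even): block diagonal with k-th diagonal block `(n−2k+1)I₂`. -/
def Heven (n : ℕ) : Matrix (Fin (2*n)) (Fin (2*n)) ℝ :=
  Matrix.of fun r c =>
    if r = c then (n : ℝ) - 2*((r:ℕ)/2 : ℕ) - 1 else 0

/-- The standard symplectic matrix `J`. -/
def Jmat (n : ℕ) : Matrix (Fin (2*n)) (Fin (2*n)) ℝ :=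
  Matrix.of fun i j => if (i:ℕ) + (j:ℕ) = 2*n - 1 then (-1 : ℝ)^((j:ℕ)+1) else 0


-- ===== auxiliary lemmas =====

lemma I2_t : I2ᵀ = I2 := by unfold I2; ext i j; fin_cases i <;> fin_cases j <;> rfl
lemma Tm_t : Tmᵀ = Tm := by unfold Tm; ext i j; fin_cases i <;> fin_cases j <;> rfl

def BX (n : ℕ) : ℕ → Matrix (Fin 2) (Fin 2) ℝ := fun k =>
    if k < n/2 then cc n k • I2
    else if k = n/2 then cc n (n/2) • Tm
    else -(cc n k) • I2

def BY (n : ℕ) : ℕ → Matrix (Fin 2) (Fin 2) ℝ := fun k =>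
    if k = n/2 then cc n (n/2) • Pm else cc n k • Rm

lemma Xeven_eq (n : ℕ) : Xeven n = blkSup n (BX n) := rfl
lemma Yeven_eq (n : ℕ) : Yeven n = blkSup n (BY n) := rfl

lemma cc_symm (n k : ℕ) (h : k ≤ n) : cc n (n - k) = cc n k := by
  unfold cc
  congr 1
  have : n - (n - k) = k := by omega
  rw [this]; ring

lemma cc_sq (n k : ℕ) : cc n k * cc n k = ((k * (n - k) : ℕ) : ℝ) := by
  unfold cc
  rw [Real.mul_self_sqrt (by positivity)]
  push_cast
  ring

lemma sum_two {N : ℕ} (f : Fin N → ℝ) (i j : Fin N) (hij : i ≠ j)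
    (h : ∀ k, k ≠ i → k ≠ j → f k = 0) : ∑ k, f k = f i + f j := by
  rw [← Finset.sum_pair hij]
  refine (Finset.sum_subset (Finset.subset_univ _) (fun k _ hk => ?_)).symm
  simp only [Finset.mem_insert, Finset.mem_singleton] at hk
  push_neg at hk
  exact h k hk.1 hk.2

lemma neg_one_pow_mod (m : ℕ) : ((-1:ℝ))^m = (-1)^(m % 2) := by
  conv_lhs => rw [← Nat.div_add_mod m 2]
  rw [pow_add, pow_mul]
  norm_num

lemma Heven_mul_apply (n : ℕ) (M : Matrix (Fin (2*n)) (Fin (2*n)) ℝ) (r c : Fin (2*n)) :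
    (Heven n * M) r c = ((n:ℝ) - 2*(((r:ℕ)/2 : ℕ) : ℝ) - 1) * M r c := by
  simp [Heven, Matrix.mul_apply, ite_mul, Finset.sum_ite_eq]

lemma mul_Heven_apply (n : ℕ) (M : Matrix (Fin (2*n)) (Fin (2*n)) ℝ) (r c : Fin (2*n)) :
    (M * Heven n) r c = M r c * ((n:ℝ) - 2*(((c:ℕ)/2 : ℕ) : ℝ) - 1) := by
  simp [Heven, Matrix.mul_apply, mul_ite, Finset.sum_ite_eq']

lemma Heven_transpose (n : ℕ) : (Heven n)ᵀ = Heven n := by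
  ext r c
  rcases eq_or_ne r c with h | h
  · subst h; rfl
  · simp [Heven, transpose_apply, h, Ne.symm h]

lemma comm_H (n : ℕ) (B : ℕ → Matrix (Fin 2) (Fin 2) ℝ) :
    Heven n * blkSup n B - blkSup n B * Heven n = (2:ℝ) • blkSup n B := by
  ext r c
  rw [Matrix.sub_apply, Matrix.smul_apply, Heven_mul_apply, mul_Heven_apply]
  rcases eq_or_ne ((c:ℕ)/2) ((r:ℕ)/2 + 1) with h | h
  · have hr : ((((c:ℕ)/2 : ℕ)):ℝ) = (((r:ℕ)/2 : ℕ) : ℝ) + 1 := by rw [h]; push_cast; ring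
    simp only [blkSup, Matrix.of_apply, if_pos h]
    rw [hr, smul_eq_mul]; ring
  · simp only [blkSup, Matrix.of_apply, if_neg h]
    simp

lemma sp_H (n : ℕ) (hn : 1 ≤ n) :
    (Heven n)ᵀ * Jmat n + Jmat n * Heven n = 0 := by
  ext r c
  rw [Matrix.add_apply, Heven_transpose, Heven_mul_apply, mul_Heven_apply]
  simp only [Jmat, Matrix.of_apply, Matrix.zero_apply]
  rcases eq_or_ne ((r:ℕ) + (c:ℕ)) (2*n-1) with h | h
  · rw [if_pos h]
    have hr : (r:ℕ) < 2*n := r.isLt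
    have h2 : (r:ℕ)/2 + (c:ℕ)/2 + 1 = n := by omega
    have h3 : ((((r:ℕ)/2 : ℕ)):ℝ) + (((c:ℕ)/2 : ℕ):ℝ) + 1 = (n:ℝ) := by
      exact_mod_cast congrArg (Nat.cast : ℕ → ℝ) h2
    linear_combination (-2:ℝ) * ((-1:ℝ)^((c:ℕ)+1)) * h3
  · rw [if_neg h]; ring

lemma mul_Jmat_apply (n : ℕ) (hn : 1 ≤ n) (M : Matrix (Fin (2*n)) (Fin (2*n)) ℝ)
    (r c : Fin (2*n)) :
    (M * Jmat n) r c = M r ⟨2*n-1-(c:ℕ), by omega⟩ * (-1:ℝ)^((c:ℕ)+1) := by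
  rw [Matrix.mul_apply, Finset.sum_eq_single (⟨2*n-1-(c:ℕ), by omega⟩ : Fin (2*n))]
  · have hc : (c:ℕ) < 2*n := c.isLt
    have h : (2*n-1-(c:ℕ)) + (c:ℕ) = 2*n-1 := by omega
    simp [Jmat, h]
  · intro k _ hk
    have hc : (c:ℕ) < 2*n := c.isLt
    have : ¬((k:ℕ) + (c:ℕ) = 2*n - 1) := by
      intro h; exact hk (Fin.ext (by simp; omega))
    simp [Jmat, this]
  · intro h; exact absurd (Finset.mem_univ _) h

lemma Jmat_mul_apply (n : ℕ) (hn : 1 ≤ n) (M : Matrix (Fin (2*n)) (Fin (2*n)) ℝ)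
    (r c : Fin (2*n)) :
    (Jmat n * M) r c = (-1:ℝ)^((2*n-1-(r:ℕ))+1) * M ⟨2*n-1-(r:ℕ), by omega⟩ c := by
  rw [Matrix.mul_apply, Finset.sum_eq_single (⟨2*n-1-(r:ℕ), by omega⟩ : Fin (2*n))]
  · have hr : (r:ℕ) < 2*n := r.isLt
    have h : (r:ℕ) + (2*n-1-(r:ℕ)) = 2*n-1 := by omega
    simp [Jmat, h]
  · intro k _ hk
    have hr : (r:ℕ) < 2*n := r.isLt
    have : ¬((r:ℕ) + (k:ℕ) = 2*n - 1) := by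
      intro h; exact hk (Fin.ext (by simp; omega))
    simp [Jmat, this]
  · intro h; exact absurd (Finset.mem_univ _) h

lemma sp_blk (n : ℕ) (hn : 1 ≤ n) (B : ℕ → Matrix (Fin 2) (Fin 2) ℝ)
    (hB : ∀ k, 1 ≤ k → k ≤ n-1 → ∀ (s t : ℕ) (hs : s < 2) (ht : t < 2),
      (-1:ℝ)^(s+1) * B (n-k) ⟨1-s, by omega⟩ ⟨t, ht⟩
        + (-1:ℝ)^t * B k ⟨1-t, by omega⟩ ⟨s, hs⟩ = 0) :
    (blkSup n B)ᵀ * Jmat n + Jmat n * blkSup n B = 0 := by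
  ext r c
  rw [Matrix.add_apply, Matrix.zero_apply, mul_Jmat_apply n hn, Jmat_mul_apply n hn,
    transpose_apply]
  simp only [blkSup, Matrix.of_apply]
  have hr : (r:ℕ) < 2*n := r.isLt
  have hc : (c:ℕ) < 2*n := c.isLt
  rcases eq_or_ne ((r:ℕ)/2 + (c:ℕ)/2) n with h | h
  · have h1 : 1 ≤ (c:ℕ)/2 := by omega
    have h2 : (c:ℕ)/2 ≤ n - 1 := by omega
    rw [if_pos (show (r:ℕ)/2 = ((⟨2*n-1-(c:ℕ), by omega⟩ : Fin (2*n)):ℕ)/2 + 1 by simp; omega)]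
    rw [if_pos (show (c:ℕ)/2 = ((⟨2*n-1-(r:ℕ), by omega⟩ : Fin (2*n)):ℕ)/2 + 1 by simp; omega)]
    have e1 : ((⟨2*n-1-(c:ℕ), by omega⟩ : Fin (2*n)):ℕ)/2 + 1 = n - (c:ℕ)/2 := by simp; omega
    have e2 : ((⟨2*n-1-(c:ℕ), by omega⟩ : Fin (2*n)):ℕ)%2 = 1 - (c:ℕ)%2 := by simp; omega
    have e3 : ((⟨2*n-1-(r:ℕ), by omega⟩ : Fin (2*n)):ℕ)/2 + 1 = (c:ℕ)/2 := by simp; omega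
    have e4 : ((⟨2*n-1-(r:ℕ), by omega⟩ : Fin (2*n)):ℕ)%2 = 1 - (r:ℕ)%2 := by simp; omega
    have s1 : (-1:ℝ)^((c:ℕ)+1) = (-1)^((c:ℕ)%2+1) := by
      rw [neg_one_pow_mod ((c:ℕ)+1), neg_one_pow_mod ((c:ℕ)%2+1)]
      congr 1; omega
    have s2 : (-1:ℝ)^((2*n-1-(r:ℕ))+1) = (-1)^((r:ℕ)%2) := by
      rw [neg_one_pow_mod ((2*n-1-(r:ℕ))+1), neg_one_pow_mod ((r:ℕ)%2)]
      congr 1; omega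
    simp only [e1, e2, e3, e4, s1, s2]
    have := hB ((c:ℕ)/2) h1 h2 ((c:ℕ)%2) ((r:ℕ)%2) (by omega) (by omega)
    linarith
  · rw [if_neg (show ¬((r:ℕ)/2 = ((⟨2*n-1-(c:ℕ), by omega⟩ : Fin (2*n)):ℕ)/2 + 1) by simp; omega)]
    rw [if_neg (show ¬((c:ℕ)/2 = ((⟨2*n-1-(r:ℕ), by omega⟩ : Fin (2*n)):ℕ)/2 + 1) by simp; omega)]
    ring

lemma hBX (n : ℕ) (hne : Even n) : ∀ k, 1 ≤ k → k ≤ n-1 → ∀ (s t : ℕ) (hs : s < 2) (ht : t < 2),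
    (-1:ℝ)^(s+1) * BX n (n-k) ⟨1-s, by omega⟩ ⟨t, ht⟩
      + (-1:ℝ)^t * BX n k ⟨1-t, by omega⟩ ⟨s, hs⟩ = 0 := by
  intro k hk1 hk2 s t hs ht
  obtain ⟨m, hm⟩ := hne
  have hm2 : n / 2 = m := by omega
  have hsym : cc n (n-k) = cc n k := cc_symm n k (by omega)
  unfold BX
  rcases lt_trichotomy k (n/2) with h | h | h
  · rw [if_pos h, if_neg (by omega : ¬ (n - k < n/2)), if_neg (by omega : ¬ (n - k = n/2))]
    interval_cases s <;> interval_cases t <;>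
      simp [I2, hsym, Matrix.smul_apply] <;> ring
  · rw [if_neg (by omega : ¬ (n - k < n/2)), if_pos (by omega : n - k = n/2),
      if_neg (by omega : ¬ k < n/2), if_pos h]
    interval_cases s <;> interval_cases t <;>
      simp [Tm, hsym, Matrix.smul_apply] <;> ring
  · rw [if_pos (by omega : n - k < n/2), if_neg (by omega : ¬ k < n/2),
      if_neg (by omega : ¬ k = n/2)]
    interval_cases s <;> interval_cases t <;>
      simp [I2, hsym, Matrix.smul_apply] <;> ring

lemma hBY (n : ℕ) (hne : Even n) : ∀ k, 1 ≤ k → k ≤ n-1 → ∀ (s t : ℕ) (hs : s < 2) (ht : t < 2),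
    (-1:ℝ)^(s+1) * BY n (n-k) ⟨1-s, by omega⟩ ⟨t, ht⟩
      + (-1:ℝ)^t * BY n k ⟨1-t, by omega⟩ ⟨s, hs⟩ = 0 := by
  intro k hk1 hk2 s t hs ht
  obtain ⟨m, hm⟩ := hne
  have hsym : cc n (n-k) = cc n k := cc_symm n k (by omega)
  unfold BY
  rcases eq_or_ne k (n/2) with h | h
  · rw [if_pos (by omega : n - k = n/2), if_pos h]
    interval_cases s <;> interval_cases t <;>
      simp [Pm, Matrix.smul_apply] <;> ring
  · rw [if_neg (by omega : ¬ (n - k = n/2)), if_neg h]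
    interval_cases s <;> interval_cases t <;>
      simp [Rm, hsym, Matrix.smul_apply] <;> ring

lemma blkSup_mul_blkSup (n : ℕ) (B₁ B₂ : ℕ → Matrix (Fin 2) (Fin 2) ℝ) (r c : Fin (2*n)) :
    (blkSup n B₁ * blkSup n B₂) r c =
      if (c:ℕ)/2 = (r:ℕ)/2 + 2 then
        (B₁ ((r:ℕ)/2+1) * B₂ ((r:ℕ)/2+2)) ⟨(r:ℕ)%2, by omega⟩ ⟨(c:ℕ)%2, by omega⟩
      else 0 := by
  rw [Matrix.mul_apply]
  rcases eq_or_ne ((c:ℕ)/2) ((r:ℕ)/2 + 2) with h | h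
  · rw [if_pos h]
    have hc : (c:ℕ) < 2*n := c.isLt
    have hb : 2*((r:ℕ)/2+1)+1 < 2*n := by omega
    rw [sum_two _ ⟨2*((r:ℕ)/2+1), by omega⟩ ⟨2*((r:ℕ)/2+1)+1, by omega⟩
        (Fin.ne_of_val_ne (by simp))]
    · simp only [blkSup, Matrix.of_apply]
      have d0 : (2*((r:ℕ)/2+1))/2 = (r:ℕ)/2+1 := by omega
      have e0 : (2*((r:ℕ)/2+1))%2 = 0 := by omega
      have d1 : (2*((r:ℕ)/2+1)+1)/2 = (r:ℕ)/2+1 := by omega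
      have e1 : (2*((r:ℕ)/2+1)+1)%2 = 1 := by omega
      have hcc : (c:ℕ)/2 = (r:ℕ)/2+1+1 := by omega
      simp only [d0, e0, d1, e1, hcc, if_true, eq_self_iff_true]
      rw [Matrix.mul_apply, Fin.sum_univ_two]
      simp [Fin.mk_zero, Fin.mk_one]
    · intro k hk1 hk2
      have h1 : (k:ℕ) ≠ 2*((r:ℕ)/2+1) := by simpa using Fin.val_ne_of_ne hk1
      have h2 : (k:ℕ) ≠ 2*((r:ℕ)/2+1)+1 := by simpa using Fin.val_ne_of_ne hk2
      simp only [blkSup, Matrix.of_apply]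
      rw [if_neg (show ¬((k:ℕ)/2 = (r:ℕ)/2+1) by omega), zero_mul]
  · rw [if_neg h]
    apply Finset.sum_eq_zero
    intro k _
    simp only [blkSup, Matrix.of_apply]
    rcases eq_or_ne ((k:ℕ)/2) ((r:ℕ)/2+1) with hk | hk
    · rw [if_neg (show ¬((c:ℕ)/2 = (k:ℕ)/2+1) by omega), mul_zero]
    · rw [if_neg (show ¬((k:ℕ)/2 = (r:ℕ)/2+1) by omega), zero_mul]

lemma blkSup_mul_transpose (n : ℕ) (B₁ B₂ : ℕ → Matrix (Fin 2) (Fin 2) ℝ) (r c : Fin (2*n)) :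
    (blkSup n B₁ * (blkSup n B₂)ᵀ) r c =
      if (c:ℕ)/2 = (r:ℕ)/2 ∧ (r:ℕ)/2 + 2 ≤ n then
        (B₁ ((r:ℕ)/2+1) * (B₂ ((r:ℕ)/2+1))ᵀ) ⟨(r:ℕ)%2, by omega⟩ ⟨(c:ℕ)%2, by omega⟩
      else 0 := by
  rw [Matrix.mul_apply]
  by_cases h : (c:ℕ)/2 = (r:ℕ)/2 ∧ (r:ℕ)/2 + 2 ≤ n
  · rw [if_pos h]
    obtain ⟨hcr, hrn⟩ := h
    have hb : 2*((r:ℕ)/2+1)+1 < 2*n := by omega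
    rw [sum_two _ ⟨2*((r:ℕ)/2+1), by omega⟩ ⟨2*((r:ℕ)/2+1)+1, by omega⟩
        (Fin.ne_of_val_ne (by simp))]
    · simp only [blkSup, transpose_apply, Matrix.of_apply]
      have d0 : (2*((r:ℕ)/2+1))/2 = (r:ℕ)/2+1 := by omega
      have e0 : (2*((r:ℕ)/2+1))%2 = 0 := by omega
      have d1 : (2*((r:ℕ)/2+1)+1)/2 = (r:ℕ)/2+1 := by omega
      have e1 : (2*((r:ℕ)/2+1)+1)%2 = 1 := by omega
      simp only [d0, e0, d1, e1, hcr, if_true, eq_self_iff_true]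
      rw [Matrix.mul_apply, Fin.sum_univ_two]
      simp [Fin.mk_zero, Fin.mk_one]
    · intro k hk1 hk2
      have h1 : (k:ℕ) ≠ 2*((r:ℕ)/2+1) := by simpa using Fin.val_ne_of_ne hk1
      have h2 : (k:ℕ) ≠ 2*((r:ℕ)/2+1)+1 := by simpa using Fin.val_ne_of_ne hk2
      simp only [blkSup, transpose_apply, Matrix.of_apply]
      rw [if_neg (show ¬((k:ℕ)/2 = (r:ℕ)/2+1) by omega), zero_mul]
  · rw [if_neg h]
    apply Finset.sum_eq_zero
    intro k _
    simp only [blkSup, transpose_apply, Matrix.of_apply]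
    rcases eq_or_ne ((k:ℕ)/2) ((r:ℕ)/2+1) with hk | hk
    · have hkb : (k:ℕ) < 2*n := k.isLt
      rw [if_neg (show ¬((k:ℕ)/2 = (c:ℕ)/2+1) by
        intro hc; exact h ⟨by omega, by omega⟩), mul_zero]
    · rw [if_neg (show ¬((k:ℕ)/2 = (r:ℕ)/2+1) by omega), zero_mul]

lemma transpose_mul_blkSup (n : ℕ) (B₁ B₂ : ℕ → Matrix (Fin 2) (Fin 2) ℝ) (r c : Fin (2*n)) :
    ((blkSup n B₁)ᵀ * blkSup n B₂) r c =
      if (c:ℕ)/2 = (r:ℕ)/2 ∧ 1 ≤ (r:ℕ)/2 then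
        ((B₁ ((r:ℕ)/2))ᵀ * B₂ ((r:ℕ)/2)) ⟨(r:ℕ)%2, by omega⟩ ⟨(c:ℕ)%2, by omega⟩
      else 0 := by
  rw [Matrix.mul_apply]
  by_cases h : (c:ℕ)/2 = (r:ℕ)/2 ∧ 1 ≤ (r:ℕ)/2
  · rw [if_pos h]
    obtain ⟨hcr, hr1⟩ := h
    have hr : (r:ℕ) < 2*n := r.isLt
    have hb : 2*((r:ℕ)/2-1)+1 < 2*n := by omega
    rw [sum_two _ ⟨2*((r:ℕ)/2-1), by omega⟩ ⟨2*((r:ℕ)/2-1)+1, by omega⟩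
        (Fin.ne_of_val_ne (by simp))]
    · simp only [blkSup, transpose_apply, Matrix.of_apply]
      have d0 : (2*((r:ℕ)/2-1))/2 + 1 = (r:ℕ)/2 := by omega
      have e0 : (2*((r:ℕ)/2-1))%2 = 0 := by omega
      have d1 : (2*((r:ℕ)/2-1)+1)/2 + 1 = (r:ℕ)/2 := by omega
      have e1 : (2*((r:ℕ)/2-1)+1)%2 = 1 := by omega
      simp only [d0, e0, d1, e1, hcr, if_true, eq_self_iff_true]
      rw [Matrix.mul_apply, Fin.sum_univ_two]
      simp [Fin.mk_zero, Fin.mk_one]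
    · intro k hk1 hk2
      have h1 : (k:ℕ) ≠ 2*((r:ℕ)/2-1) := by simpa using Fin.val_ne_of_ne hk1
      have h2 : (k:ℕ) ≠ 2*((r:ℕ)/2-1)+1 := by simpa using Fin.val_ne_of_ne hk2
      simp only [blkSup, transpose_apply, Matrix.of_apply]
      rw [if_neg (show ¬((r:ℕ)/2 = (k:ℕ)/2+1) by omega), zero_mul]
  · rw [if_neg h]
    apply Finset.sum_eq_zero
    intro k _
    simp only [blkSup, transpose_apply, Matrix.of_apply]
    rcases eq_or_ne ((r:ℕ)/2) ((k:ℕ)/2+1) with hk | hk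
    · rw [if_neg (show ¬((c:ℕ)/2 = (k:ℕ)/2+1) by
        intro hc; exact h ⟨by omega, by omega⟩), mul_zero]
    · rw [if_neg (show ¬((r:ℕ)/2 = (k:ℕ)/2+1) by omega), zero_mul]

lemma XY_blocks (n k : ℕ) : BX n k * BY n (k+1) = BY n k * BX n (k+1) := by
  unfold BX BY
  split_ifs <;> try (exfalso; omega)
  all_goals
    ext i j <;> fin_cases i <;> fin_cases j <;>
      simp [I2, Tm, Rm, Pm, Matrix.mul_apply, Fin.sum_univ_two] <;> ring

lemma XXt_blocks (n k : ℕ) : BX n k * (BX n k)ᵀ = (cc n k * cc n k) • I2 := by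
  unfold BX
  simp only [Matrix.transpose_smul, Matrix.transpose_neg, I2_t, Tm_t, apply_ite Matrix.transpose]
  split_ifs with h1 h2
  · ext i j <;> fin_cases i <;> fin_cases j <;>
      simp [I2, Matrix.mul_apply, Matrix.transpose_apply, Fin.sum_univ_two] <;> ring
  · subst h2
    ext i j <;> fin_cases i <;> fin_cases j <;>
      simp [I2, Tm, Matrix.mul_apply, Matrix.transpose_apply, Fin.sum_univ_two] <;> ring
  · ext i j <;> fin_cases i <;> fin_cases j <;>
      simp [I2, Matrix.mul_apply, Matrix.transpose_apply, Fin.sum_univ_two] <;> ring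

lemma XtX_blocks (n k : ℕ) : (BX n k)ᵀ * BX n k = (cc n k * cc n k) • I2 := by
  unfold BX
  simp only [Matrix.transpose_smul, Matrix.transpose_neg, I2_t, Tm_t, apply_ite Matrix.transpose]
  split_ifs with h1 h2
  · ext i j <;> fin_cases i <;> fin_cases j <;>
      simp [I2, Matrix.mul_apply, Matrix.transpose_apply, Fin.sum_univ_two] <;> ring
  · subst h2
    ext i j <;> fin_cases i <;> fin_cases j <;>
      simp [I2, Tm, Matrix.mul_apply, Matrix.transpose_apply, Fin.sum_univ_two] <;> ring
  · ext i j <;> fin_cases i <;> fin_cases j <;>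
      simp [I2, Matrix.mul_apply, Matrix.transpose_apply, Fin.sum_univ_two] <;> ring

/-- The explicit sl₂-triple relations for `H`, `X`, `Y` (n even): they lie in `sp(2n,ℝ)`,
`[H,X] = 2X`, `[H,Y] = 2Y`, `[X,Y] = 0`, and `[X,Xᵀ] = H`. -/
theorem explicit_sl2_relations (n : ℕ) (hn : 2 ≤ n) (hne : Even n) :
    ((Heven n)ᵀ * Jmat n + Jmat n * Heven n = 0 ∧
     (Xeven n)ᵀ * Jmat n + Jmat n * Xeven n = 0 ∧
     (Yeven n)ᵀ * Jmat n + Jmat n * Yeven n = 0) ∧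
    (Heven n * Xeven n - Xeven n * Heven n = (2 : ℝ) • Xeven n) ∧
    (Heven n * Yeven n - Yeven n * Heven n = (2 : ℝ) • Yeven n) ∧
    (Xeven n * Yeven n = Yeven n * Xeven n) ∧
    (Xeven n * (Xeven n)ᵀ - (Xeven n)ᵀ * Xeven n = Heven n) := by
  have hn1 : 1 ≤ n := by omega
  refine ⟨⟨sp_H n hn1, ?_, ?_⟩, ?_, ?_, ?_, ?_⟩
  · rw [Xeven_eq]; exact sp_blk n hn1 _ (hBX n hne)
  · rw [Yeven_eq]; exact sp_blk n hn1 _ (hBY n hne)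
  · rw [Xeven_eq]; exact comm_H n (BX n)
  · rw [Yeven_eq]; exact comm_H n (BY n)
  · rw [Xeven_eq, Yeven_eq]
    ext r c
    rw [blkSup_mul_blkSup, blkSup_mul_blkSup]
    by_cases h : (c:ℕ)/2 = (r:ℕ)/2 + 2
    · rw [if_pos h, if_pos h,
        show (r:ℕ)/2+2 = (r:ℕ)/2+1+1 from rfl, XY_blocks n ((r:ℕ)/2+1)]
    · rw [if_neg h, if_neg h]
  · rw [Xeven_eq]
    ext r c
    rw [Matrix.sub_apply, blkSup_mul_transpose, transpose_mul_blkSup,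
      XXt_blocks, XtX_blocks, cc_sq, cc_sq]
    simp only [Matrix.smul_apply, smul_eq_mul, Heven, Matrix.of_apply]
    have hr : (r:ℕ) < 2*n := r.isLt
    have hc : (c:ℕ) < 2*n := c.isLt
    by_cases hcr : (c:ℕ)/2 = (r:ℕ)/2
    · by_cases hrc : r = c
      · subst hrc
        rw [if_pos rfl]
        have hI : I2 ⟨(r:ℕ)%2, by omega⟩ ⟨(r:ℕ)%2, by omega⟩ = 1 := by
          rcases (show (r:ℕ)%2 = 0 ∨ (r:ℕ)%2 = 1 by omega) with h0 | h0 <;>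
            simp only [h0] <;> simp [I2]
        rw [hI]
        by_cases h1 : (r:ℕ)/2 + 2 ≤ n
        · rw [if_pos ⟨rfl, h1⟩]
          by_cases h2 : 1 ≤ (r:ℕ)/2
          · rw [if_pos ⟨rfl, h2⟩]
            push_cast [Nat.cast_sub (show (r:ℕ)/2+1 ≤ n by omega),
              Nat.cast_sub (show (r:ℕ)/2 ≤ n by omega)]
            ring
          · rw [if_neg (fun hh => h2 hh.2)]
            have hp0 : (r:ℕ)/2 = 0 := by omega
            rw [hp0]
            push_cast [Nat.cast_sub (show (1:ℕ) ≤ n by omega)]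
            ring
        · rw [if_neg (fun hh => h1 hh.2)]
          have h2 : 1 ≤ (r:ℕ)/2 := by omega
          rw [if_pos ⟨rfl, h2⟩]
          have hp : (r:ℕ)/2 = n - 1 := by omega
          rw [hp, show n - (n-1) = 1 by omega, mul_one]
          push_cast [Nat.cast_sub (show (1:ℕ) ≤ n by omega)]
          ring
      · rw [if_neg hrc]
        have hne2 : (r:ℕ)%2 ≠ (c:ℕ)%2 := by
          intro hh; exact hrc (Fin.ext (by omega))
        rcases (show (r:ℕ)%2 = 0 ∨ (r:ℕ)%2 = 1 by omega) with h0 | h0 <;>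
          rcases (show (c:ℕ)%2 = 0 ∨ (c:ℕ)%2 = 1 by omega) with h3 | h3 <;>
          first
          | (exfalso; omega)
          | (simp only [h0, h3]; simp [I2])
    · rw [if_neg (fun hh => hcr hh.1), if_neg (fun hh => hcr hh.1),
        if_neg (show ¬ r = c by intro hh; subst hh; exact hcr rfl)]
      ring

end
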